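/- arXiv:1806.10324 — 3 statements merged into one kernel-verified Lean document; each statement's English description precedes it below -/
import Mathlib

section
/- If a quantum channel N(ρ) = Σᵢ Eᵢ ρ Eᵢ† on a finite-dimensional Hilbert space fixes a †-subalgebra B in the Heisenberg picture (i.e., Σᵢ Eᵢ† B Eᵢ = B for all B ∈ B), then every Kraus operator Eᵢ commutes with every element of B. -/
open Matrix BigOperators
open scoped ComplexOrder

/-!
Write `Φ(Y) = ∑ⱼ Eⱼ† Y Eⱼ` and `Cⱼ = [Eⱼ, X]`. Expanding,
`∑ⱼ Cⱼ† Cⱼ = Φ(X† X) - X† Φ(X) - Φ(X†) X + X† Φ(1) X`, which vanishes because `Φ` is unital and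
fixes `X`, `X†` and `X† X`, all of which lie in `B`. A sum of positive semidefinite matrices `Cⱼ† Cⱼ`
vanishes only if every `Cⱼ` does, as one sees by taking traces.
-/

theorem Matrix.eq_zero_of_sum_conjTranspose_mul_self_eq_zero {ι m n R : Type*} [Fintype m]
    [Fintype n] [Ring R] [PartialOrder R] [StarRing R] [StarOrderedRing R] [NoZeroDivisors R]
    {s : Finset ι} {C : ι → Matrix m n R} (h : ∑ j ∈ s, (C j)ᴴ * C j = 0) :
    ∀ j ∈ s, C j = 0 := by
  have htrace : ∑ j ∈ s, ((C j)ᴴ * C j).trace = 0 := by rw [← trace_sum, h, trace_zero]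
  intro j hj
  rw [← trace_conjTranspose_mul_self_eq_zero_iff]
  exact (Finset.sum_eq_zero_iff_of_nonneg fun i _ =>
    (posSemidef_conjTranspose_mul_self (C i)).trace_nonneg).1 htrace j hj

section StarRing

variable {ι R : Type*} [Ring R] [StarRing R]

theorem sum_star_commutator_mul_self (s : Finset ι) (E : ι → R) (X : R) :
    ∑ j ∈ s, star (E j * X - X * E j) * (E j * X - X * E j) =
      ∑ j ∈ s, star (E j) * (star X * X) * E j - star X * ∑ j ∈ s, star (E j) * X * E j
        - (∑ j ∈ s, star (E j) * star X * E j) * X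
        + star X * (∑ j ∈ s, star (E j) * E j) * X := by
  simp only [Finset.mul_sum, Finset.sum_mul, ← Finset.sum_sub_distrib, ← Finset.sum_add_distrib]
  refine Finset.sum_congr rfl fun j _ => ?_
  simp only [star_sub, star_mul]
  noncomm_ring

theorem sum_star_commutator_mul_self_eq_zero {s : Finset ι} {E : ι → R} {X : R}
    (hunital : ∑ j ∈ s, star (E j) * E j = 1)
    (hX : ∑ j ∈ s, star (E j) * X * E j = X)
    (hstarX : ∑ j ∈ s, star (E j) * star X * E j = star X)
    (hstarXX : ∑ j ∈ s, star (E j) * (star X * X) * E j = star X * X) :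
    ∑ j ∈ s, star (E j * X - X * E j) * (E j * X - X * E j) = 0 := by
  rw [sum_star_commutator_mul_self, hunital, hX, hstarX, hstarXX, mul_one]
  abel

end StarRing

/-- If a channel `N(ρ) = ∑ i, E i * ρ * (E i)ᴴ` on a finite-dimensional Hilbert space
fixes a unital `*`-subalgebra `B` in the Heisenberg picture, then every Kraus operator
commutes with every element of `B`. -/
theorem kraus_commute_of_fixes_algebra {n k : ℕ}
    (B : StarSubalgebra ℂ (Matrix (Fin n) (Fin n) ℂ))
    (E : Fin k → Matrix (Fin n) (Fin n) ℂ)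
    (htp : ∑ i, (E i)ᴴ * E i = 1)
    (hfix : ∀ X ∈ B, ∑ i, (E i)ᴴ * X * E i = X) :
    ∀ i, ∀ X ∈ B, E i * X = X * E i := by
  intro i X hX
  have hcomm : ∑ j, (E j * X - X * E j)ᴴ * (E j * X - X * E j) = 0 :=
    sum_star_commutator_mul_self_eq_zero htp (hfix X hX) (hfix _ (star_mem hX))
      (hfix _ (mul_mem (star_mem hX) hX))
  exact sub_eq_zero.1 (eq_zero_of_sum_conjTranspose_mul_self_eq_zero hcomm i (Finset.mem_univ i))
end

section
/- Let P be an orthogonal projection on a finite-dimensional Hilbert space and let E₁,…,E_k satisfy Σᵢ Eᵢ† Eᵢ = 1. If Σᵢ Eᵢ† P Eᵢ = P and Σᵢ Eᵢ† (1−P) Eᵢ = 1−P, then P Eᵢ = Eᵢ P for all i. -/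
/-!
With `Q = 1 - P`, conjugating the fixed-point identity for `Q` by `P` gives
`∑ᵢ (Q Eᵢ P)ᴴ (Q Eᵢ P) = P Q P = 0`, and a vanishing sum of positive matrices `Aᴴ A` forces each
`A = 0`. Hence `Q Eᵢ P = 0`, i.e. `Eᵢ P = P Eᵢ P`; exchanging the roles of `P` and `Q` gives
`P Eᵢ Q = 0`, i.e. `P Eᵢ = P Eᵢ P`.
-/

open Matrix BigOperators

theorem IsStarProjection.star_mul_mul_mul_self {R : Type*} [NonUnitalSemiring R] [StarRing R]
    {q p : R} (hq : IsStarProjection q) (hp : IsSelfAdjoint p) (a : R) :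
    star (q * a * p) * (q * a * p) = p * (star a * q * a) * p := by
  have hq' : star q * q = q := by rw [hq.isSelfAdjoint.star_eq, hq.isIdempotentElem.eq]
  simp only [star_mul, hp.star_eq, mul_assoc]
  rw [← mul_assoc (star q), hq']

namespace Matrix

variable {ι m n R : Type*} [Fintype ι] [Fintype m] [Fintype n]
  [CommRing R] [PartialOrder R] [StarRing R] [StarOrderedRing R] [NoZeroDivisors R]

theorem sum_conjTranspose_mul_self_eq_zero_iff (A : ι → Matrix m n R) :
    ∑ i, (A i)ᴴ * A i = 0 ↔ ∀ i, A i = 0 := by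
  refine ⟨fun h i => ?_, fun h => by simp [h]⟩
  have htrace : ∑ j, ((A j)ᴴ * A j).trace = 0 := by rw [← trace_sum, h, trace_zero]
  rw [Finset.sum_eq_zero_iff_of_nonneg
    fun j _ => (posSemidef_conjTranspose_mul_self (A j)).trace_nonneg] at htrace
  exact trace_conjTranspose_mul_self_eq_zero_iff.mp (htrace i (Finset.mem_univ i))

theorem mul_mul_eq_zero_of_mul_sum_mul_eq_zero {Q P : Matrix n n R} (hQ : IsStarProjection Q)
    (hP : IsSelfAdjoint P) (E : ι → Matrix n n R)
    (h : P * (∑ i, (E i)ᴴ * Q * E i) * P = 0) : ∀ i, Q * E i * P = 0 := by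
  rw [← sum_conjTranspose_mul_self_eq_zero_iff, ← h, Finset.mul_sum, Finset.sum_mul]
  exact Finset.sum_congr rfl fun i _ => hQ.star_mul_mul_mul_self hP (E i)

theorem mul_mul_one_sub_eq_zero_of_sum_eq [DecidableEq n] {Q : Matrix n n R}
    (hQ : IsStarProjection Q) (E : ι → Matrix n n R) (h : ∑ i, (E i)ᴴ * Q * E i = Q) :
    ∀ i, Q * E i * (1 - Q) = 0 :=
  mul_mul_eq_zero_of_mul_sum_mul_eq_zero hQ hQ.one_sub.isSelfAdjoint E <| by
    rw [h, hQ.one_sub_mul_self, zero_mul]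

end Matrix

open scoped ComplexOrder

theorem kraus_commute_of_fixes_projection_general {n k : ℕ}
    (P : Matrix (Fin n) (Fin n) ℂ) (hP : P * P = P) (hPsa : Pᴴ = P)
    (E : Fin k → Matrix (Fin n) (Fin n) ℂ)
    (hfixP : ∑ i, (E i)ᴴ * P * E i = P)
    (hfixPc : ∑ i, (E i)ᴴ * (1 - P) * E i = 1 - P) :
    ∀ i, P * E i = E i * P := by
  have hPproj : IsStarProjection P := ⟨hP, hPsa⟩
  intro i
  have hleft := mul_mul_one_sub_eq_zero_of_sum_eq hPproj E hfixP i
  have hright := mul_mul_one_sub_eq_zero_of_sum_eq hPproj.one_sub E hfixPc i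
  rw [sub_sub_cancel, sub_mul, one_mul, sub_mul, sub_eq_zero] at hright
  rw [mul_sub, mul_one, sub_eq_zero] at hleft
  rw [hleft, hright]

/-- If a trace-preserving Kraus family fixes an orthogonal projection `P` and its
complement `1 - P` in the Heisenberg picture, then every Kraus operator commutes
with `P`. -/
theorem kraus_commute_of_fixes_projection {n k : ℕ}
    (P : Matrix (Fin n) (Fin n) ℂ) (hP : P * P = P) (hPsa : Pᴴ = P)
    (E : Fin k → Matrix (Fin n) (Fin n) ℂ)
    (htp : ∑ i, (E i)ᴴ * E i = 1)
    (hfixP : ∑ i, (E i)ᴴ * P * E i = P)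
    (hfixPc : ∑ i, (E i)ᴴ * (1 - P) * E i = 1 - P) :
    ∀ i, P * E i = E i * P :=
  kraus_commute_of_fixes_projection_general P hP hPsa E hfixP hfixPc
end

section
/- If a channel's Heisenberg adjoint N† fixes a *-algebra B pointwise, then N†(AB) = N†(A)·B for all operators A and all B ∈ B (the extension/bimodule property). -/
open Matrix BigOperators

/-!
Write `N†(X) = ∑ᵢ Eᵢ* X Eᵢ`. For `X ∈ B` the commutators `Cᵢ = Eᵢ X - X Eᵢ` satisfy
`∑ᵢ Cᵢ* Cᵢ = X* N†(1) X - X* N†(X) - N†(X*) X + N†(X* X)`, and since `N†(1) = 1` and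
`X, X*, X* X ∈ B` are fixed by `N†` this is `X* X - X* X - X* X + X* X = 0`. A vanishing sum of positive
semidefinite matrices has vanishing summands, so every Kraus operator commutes with `X`, and
then `X` can be pulled out of `N†(A X)` on the right.
-/

section KrausDual

variable {R ι : Type*} [Ring R] [StarRing R] [Fintype ι]

def krausDual (e : ι → R) (x : R) : R := ∑ i, star (e i) * x * e i

theorem sum_star_commutator_mul_self_s11 (e : ι → R) (x : R) :
    ∑ i, star (e i * x - x * e i) * (e i * x - x * e i) =
      star x * krausDual e 1 * x - star x * krausDual e x - krausDual e (star x) * x +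
        krausDual e (star x * x) := by
  simp only [krausDual, Finset.mul_sum, Finset.sum_mul, ← Finset.sum_sub_distrib,
    ← Finset.sum_add_distrib, star_sub, star_mul]
  refine Finset.sum_congr rfl fun i _ => ?_
  noncomm_ring

theorem sum_star_commutator_mul_self_eq_zero_s11 {e : ι → R} {x : R} (h1 : krausDual e 1 = 1)
    (hx : krausDual e x = x) (hxs : krausDual e (star x) = star x)
    (hxx : krausDual e (star x * x) = star x * x) :
    ∑ i, star (e i * x - x * e i) * (e i * x - x * e i) = 0 := by
  rw [sum_star_commutator_mul_self_s11, h1, hx, hxs, hxx]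
  noncomm_ring

theorem krausDual_mul_of_commute {e : ι → R} {x : R} (h : ∀ i, e i * x = x * e i) (a : R) :
    krausDual e (a * x) = krausDual e a * x := by
  simp only [krausDual, Finset.sum_mul, mul_assoc, h]

end KrausDual

open scoped MatrixOrder ComplexOrder in
theorem Matrix.eq_zero_of_sum_conjTranspose_mul_self_eq_zero_s11 {ι m n 𝕜 : Type*} [Fintype ι]
    [Fintype m] [Fintype n] [RCLike 𝕜] {M : ι → Matrix m n 𝕜}
    (h : ∑ i, (M i)ᴴ * M i = 0) (i : ι) : M i = 0 := by
  classical
  have hnonneg : ∀ j ∈ Finset.univ, 0 ≤ (M j)ᴴ * M j := fun j _ =>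
    (posSemidef_conjTranspose_mul_self (M j)).nonneg
  exact conjTranspose_mul_self_eq_zero.mp
    ((Finset.sum_eq_zero_iff_of_nonneg hnonneg).mp h i (Finset.mem_univ i))

/-- If the Heisenberg adjoint `N†(X) = ∑ i, Eᵢᴴ X Eᵢ` of a channel fixes a
`*`-algebra `B` pointwise, then `N†(A·B) = N†(A)·B` for every operator `A` and
every `B ∈ B` (the bimodule / extension property). -/
theorem heisenberg_bimodule_property {n k : ℕ}
    (B : StarSubalgebra ℂ (Matrix (Fin n) (Fin n) ℂ))
    (E : Fin k → Matrix (Fin n) (Fin n) ℂ)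
    (htp : ∑ i, (E i)ᴴ * E i = 1)
    (hfix : ∀ X ∈ B, ∑ i, (E i)ᴴ * X * E i = X) :
    ∀ A : Matrix (Fin n) (Fin n) ℂ, ∀ X ∈ B,
      ∑ i, (E i)ᴴ * (A * X) * E i = (∑ i, (E i)ᴴ * A * E i) * X := by
  intro A X hX
  have hunital : krausDual E 1 = 1 := by
    simpa only [krausDual, star_eq_conjTranspose, mul_one] using htp
  have hcommutator := sum_star_commutator_mul_self_eq_zero_s11 hunital (hfix X hX)
    (hfix _ (star_mem hX)) (hfix _ (mul_mem (star_mem hX) hX))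
  have hcomm : ∀ i, E i * X = X * E i := fun i =>
    sub_eq_zero.mp (eq_zero_of_sum_conjTranspose_mul_self_eq_zero_s11 hcommutator i)
  exact krausDual_mul_of_commute hcomm A
end
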